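/- arXiv:1711.03719 — 3 statements merged into one kernel-verified Lean document; each statement's English description precedes it below -/
import Mathlib

section
/- For α, ω, l > 0, the general solution of q̈ + l²ω²q = α/q³ with q > 0 is given explicitly by q(t) = sqrt(A + B cos(2lωt + φ)) where A = E/(l²ω²), B² = A² - α/(l²ω²), E is the energy, and consequently every solution is periodic with period π/(lω). -/
/-!
With `ν = l ω`, the square `u = q²` of a positive solution satisfies
`ü = 2 q̇² + 2 q q̈ = 4 E - 4 ν² q²`, by the equation and the energy identity; that is, `u`
solves the linear oscillator `ü = -(2ν)² (u - E/ν²)`. So `u - E/ν²` is a combination of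
`cos 2νt` and `sin 2νt`, and evaluating the squared amplitude at `t = 0` through the energy gives
`(E/ν²)² - α/ν²`. Then `q = √u`.
-/

open Real

theorem exists_sq_eq_and_mul_cos_add_mul_sin_eq (C D : ℝ) :
    ∃ R φ, R ^ 2 = C ^ 2 + D ^ 2 ∧ ∀ x, C * cos x + D * sin x = R * cos (x + φ) := by
  set z : ℂ := ⟨C, -D⟩
  refine ⟨‖z‖, z.arg, by rw [Complex.sq_norm, Complex.normSq_mk]; ring, fun x => ?_⟩
  rw [cos_add, mul_sub, mul_left_comm, mul_left_comm _ (sin x),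
    Complex.norm_mul_cos_arg, Complex.norm_mul_sin_arg]
  simp only [z]
  ring

theorem eq_mul_cos_add_mul_sin_of_hasDerivAt {v w : ℝ → ℝ} {k : ℝ} (hk : k ≠ 0)
    (hv : ∀ t, HasDerivAt v (w t) t) (hw : ∀ t, HasDerivAt w (-k ^ 2 * v t) t) (t : ℝ) :
    v t = v 0 * cos (k * t) + w 0 / k * sin (k * t) := by
  have hcos (t : ℝ) : HasDerivAt (fun s => cos (k * s)) (-sin (k * t) * k) t := by
    simpa using ((hasDerivAt_id t).const_mul k).cos
  have hsin (t : ℝ) : HasDerivAt (fun s => sin (k * s)) (cos (k * t) * k) t := by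
    simpa using ((hasDerivAt_id t).const_mul k).sin
  -- Rotating the phase point `(v, w / k)` back by the angle `k t` gives a first integral `(F, G)`.
  set F := fun t => v t * cos (k * t) - w t / k * sin (k * t)
  set G := fun t => v t * sin (k * t) + w t / k * cos (k * t)
  have hF (t : ℝ) : HasDerivAt F 0 t := by
    refine (((hv t).fun_mul (hcos t)).fun_sub
      (((hw t).div_const k).fun_mul (hsin t))).congr_deriv ?_
    field_simp
    ring
  have hG (t : ℝ) : HasDerivAt G 0 t := by
    refine (((hv t).fun_mul (hsin t)).fun_add
      (((hw t).div_const k).fun_mul (hcos t))).congr_deriv ?_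
    field_simp
    ring
  have hF_const := is_const_of_deriv_eq_zero (fun x => (hF x).differentiableAt)
    (fun x => (hF x).deriv) t 0
  have hG_const := is_const_of_deriv_eq_zero (fun x => (hG x).differentiableAt)
    (fun x => (hG x).deriv) t 0
  simp only [F, G, mul_zero, cos_zero, sin_zero, mul_one, sub_zero, zero_add]
    at hF_const hG_const
  linear_combination cos (k * t) * hF_const + sin (k * t) * hG_const
    - v t * sin_sq_add_cos_sq (k * t)

section Ermakov

variable {α ν E : ℝ} {q : ℝ → ℝ}

theorem hasDerivAt_two_mul_mul_deriv_of_ermakov {t : ℝ} (hν : ν ≠ 0)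
    (hq : DifferentiableAt ℝ q t) (hq' : DifferentiableAt ℝ (deriv q) t) (hqt : q t ≠ 0)
    (hode : deriv (deriv q) t + ν ^ 2 * q t = α / q t ^ 3)
    (hE : 1 / 2 * deriv q t ^ 2 + ν ^ 2 / 2 * q t ^ 2 + α / (2 * q t ^ 2) = E) :
    HasDerivAt (fun s => 2 * q s * deriv q s) (-(2 * ν) ^ 2 * (q t ^ 2 - E / ν ^ 2)) t := by
  refine ((hq.hasDerivAt.const_mul 2).mul hq'.hasDerivAt).congr_deriv ?_
  have hα : q t * (α / q t ^ 3) = α / q t ^ 2 := by field_simp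
  have hE' : -(2 * ν) ^ 2 * (q t ^ 2 - E / ν ^ 2) = 4 * E - 4 * ν ^ 2 * q t ^ 2 := by
    field_simp
    ring
  rw [hE']
  linear_combination 2 * q t * hode + 4 * hE + 2 * hα

theorem ermakov_amplitude_sq {x y : ℝ} (hν : ν ≠ 0) (hx : x ≠ 0)
    (hE : 1 / 2 * y ^ 2 + ν ^ 2 / 2 * x ^ 2 + α / (2 * x ^ 2) = E) :
    (x ^ 2 - E / ν ^ 2) ^ 2 + (2 * x * y / (2 * ν)) ^ 2 = (E / ν ^ 2) ^ 2 - α / ν ^ 2 := by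
  rw [← hE]
  field_simp
  ring

theorem ermakov_sq_eq_add_mul_cos (hν : ν ≠ 0) (hq : ContDiff ℝ 2 q) (hpos : ∀ t, q t ≠ 0)
    (hode : ∀ t, deriv (deriv q) t + ν ^ 2 * q t = α / q t ^ 3)
    (hE : ∀ t, 1 / 2 * deriv q t ^ 2 + ν ^ 2 / 2 * q t ^ 2 + α / (2 * q t ^ 2) = E) :
    ∃ B φ, B ^ 2 = (E / ν ^ 2) ^ 2 - α / ν ^ 2 ∧
      ∀ t, q t ^ 2 = E / ν ^ 2 + B * cos (2 * ν * t + φ) := by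
  have hq_diff : Differentiable ℝ q := hq.differentiable (by norm_num)
  have hq'_diff : Differentiable ℝ (deriv q) := by
    simpa using hq.differentiable_iteratedDeriv 1 (by norm_num)
  have harmonic := eq_mul_cos_add_mul_sin_of_hasDerivAt (v := fun t => q t ^ 2 - E / ν ^ 2)
    (mul_ne_zero two_ne_zero hν)
    (fun t => by simpa [mul_comm] using ((hq_diff t).hasDerivAt.pow 2).sub_const (E / ν ^ 2))
    (fun t => hasDerivAt_two_mul_mul_deriv_of_ermakov hν (hq_diff t) (hq'_diff t) (hpos t)
      (hode t) (hE t))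
  obtain ⟨B, φ, hB, hφ⟩ := exists_sq_eq_and_mul_cos_add_mul_sin_eq (q 0 ^ 2 - E / ν ^ 2)
    (2 * q 0 * deriv q 0 / (2 * ν))
  refine ⟨B, φ, hB.trans (ermakov_amplitude_sq hν (hpos 0) (hE 0)), fun t => ?_⟩
  rw [← hφ, ← harmonic]
  ring

end Ermakov

theorem stmt_5_general (α ω l : ℝ) (hω : 0 < ω) (hl : 0 < l)
    (q : ℝ → ℝ) (hq : ContDiff ℝ 2 q) (hpos : ∀ t, 0 < q t)
    (hode : ∀ t, deriv (deriv q) t + l ^ 2 * ω ^ 2 * q t = α / (q t) ^ 3)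
    (E : ℝ)
    (hE : ∀ t, (1 / 2) * (deriv q t) ^ 2 + l ^ 2 * ω ^ 2 / 2 * (q t) ^ 2
        + α / (2 * (q t) ^ 2) = E) :
    (∃ B φ : ℝ, B ^ 2 = (E / (l ^ 2 * ω ^ 2)) ^ 2 - α / (l ^ 2 * ω ^ 2) ∧
      ∀ t, q t = Real.sqrt (E / (l ^ 2 * ω ^ 2) + B * Real.cos (2 * l * ω * t + φ))) ∧
    (∀ t, q (t + Real.pi / (l * ω)) = q t) := by
  simp only [← mul_pow] at hode hE ⊢
  obtain ⟨B, φ, hB, hsq⟩ :=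
    ermakov_sq_eq_add_mul_cos (by positivity) hq (fun t => (hpos t).ne') hode hE
  have hform (t : ℝ) : q t = √(E / (l * ω) ^ 2 + B * cos (2 * l * ω * t + φ)) := by
    rw [mul_assoc 2, ← hsq, sqrt_sq (hpos t).le]
  refine ⟨⟨B, φ, hB, hform⟩, fun t => ?_⟩
  have hshift : 2 * l * ω * (t + π / (l * ω)) + φ = 2 * l * ω * t + φ + 2 * π := by
    field_simp
    ring
  rw [hform, hform, hshift, cos_add_two_pi]

/-- Every positive solution of q̈ + l²ω²q = α/q³ has the explicit form
q(t) = sqrt(A + B cos(2lωt + φ)) with A = E/(l²ω²) and B² = A² - α/(l²ω²),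
and is consequently periodic with period π/(lω). -/
theorem stmt_5 (α ω l : ℝ) (hα : 0 < α) (hω : 0 < ω) (hl : 0 < l)
    (q : ℝ → ℝ) (hq : ContDiff ℝ 2 q) (hpos : ∀ t, 0 < q t)
    (hode : ∀ t, deriv (deriv q) t + l ^ 2 * ω ^ 2 * q t = α / (q t) ^ 3)
    (E : ℝ)
    (hE : ∀ t, (1 / 2) * (deriv q t) ^ 2 + l ^ 2 * ω ^ 2 / 2 * (q t) ^ 2
        + α / (2 * (q t) ^ 2) = E) :
    (∃ B φ : ℝ, B ^ 2 = (E / (l ^ 2 * ω ^ 2)) ^ 2 - α / (l ^ 2 * ω ^ 2) ∧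
      ∀ t, q t = Real.sqrt (E / (l ^ 2 * ω ^ 2) + B * Real.cos (2 * l * ω * t + φ))) ∧
    (∀ t, q (t + Real.pi / (l * ω)) = q t) :=
  stmt_5_general α ω l hω hl q hq hpos hode E hE
end

section
/- For k > 0, ω > 0 and A, B > 0, the points (q₁, q₂) = (±A(k/ω)^{k/2}(A²+B²)^{(k-1)/2}, ±B(k/ω)^{k/2}(A²+B²)^{(k-1)/2}) are critical points of the TTW effective potential V(q₁,q₂) = (ω²/2)(q₁²+q₂²)^{1/k} + (k²/2)(q₁²+q₂²)^{(k-1)/k}(A⁴/q₁² + B⁴/q₂²). -/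
/-!
Write `S = A² + B²`, `ρ = kS/ω` and `c` for the common scale of the two coordinates. Then
`c² S = ρ^k`, so at the candidate point `r = q₁² + q₂² = ρ^k`, every fractional power of `r` in
`∂V/∂q₁` is a rational function of `ρ`, and `α/q₁² + β/q₂² = S/c²`. Dividing `∂V/∂q₁` by `q₁`
leaves `(S/c²)(ω²ρ/(kS²) − k/ρ)`, which vanishes because `ωρ = kS`. The partial derivative in `q₂`
follows from the symmetry `V_{α,β}(q₁, q₂) = V_{β,α}(q₂, q₁)`.
-/

open Real

namespace TTW

noncomputable def potential (k ω α β q₁ q₂ : ℝ) : ℝ :=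
  ω ^ 2 / 2 * (q₁ ^ 2 + q₂ ^ 2) ^ ((1 : ℝ) / k)
    + k ^ 2 / 2 * (q₁ ^ 2 + q₂ ^ 2) ^ ((k - 1) / k) * (α / q₁ ^ 2 + β / q₂ ^ 2)

/-- Apart from the leading factor `x`, only `x²` occurs, so the value at `(±x, y)` is read off
from `x²` alone. -/
noncomputable def potentialDerivFst (k ω α β x y : ℝ) : ℝ :=
  x * (ω ^ 2 / k * (x ^ 2 + y ^ 2) ^ ((1 : ℝ) / k - 1)
    + k * (k - 1) * (x ^ 2 + y ^ 2) ^ ((k - 1) / k - 1) * (α / x ^ 2 + β / y ^ 2)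
    - k ^ 2 * α * (x ^ 2 + y ^ 2) ^ ((k - 1) / k) / (x ^ 2) ^ 2)

noncomputable def criticalScale (k ω A B : ℝ) : ℝ :=
  (k / ω) ^ (k / 2) * (A ^ 2 + B ^ 2) ^ ((k - 1) / 2)

variable {k ω α β : ℝ}

theorem potential_comm (q₁ q₂ : ℝ) : potential k ω α β q₁ q₂ = potential k ω β α q₂ q₁ := by
  simp only [potential, add_comm (q₁ ^ 2), add_comm (α / q₁ ^ 2)]

theorem hasDerivAt_potential_fst {x : ℝ} (y : ℝ) (hx : x ≠ 0) :
    HasDerivAt (fun q => potential k ω α β q y) (potentialDerivFst k ω α β x y) x := by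
  have hr : x ^ 2 + y ^ 2 ≠ 0 := by positivity
  have hsq : HasDerivAt (fun q : ℝ => q ^ 2 + y ^ 2) (2 * x) x := by
    simpa using (hasDerivAt_pow 2 x).add_const (y ^ 2)
  have hquot : HasDerivAt (fun q : ℝ => α / q ^ 2 + β / y ^ 2)
      (-(α * (2 * x)) / (x ^ 2) ^ 2) x := by
    simpa using ((hasDerivAt_const x α).div (hasDerivAt_pow 2 x) (pow_ne_zero 2 hx)).add_const
      (β / y ^ 2)
  refine (((hsq.rpow_const (p := 1 / k) (Or.inl hr)).const_mul (ω ^ 2 / 2)).add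
    (((hsq.rpow_const (p := (k - 1) / k) (Or.inl hr)).const_mul (k ^ 2 / 2)).mul
      hquot)).congr_deriv ?_
  unfold potentialDerivFst
  field_simp
  ring

theorem criticalScale_comm (A B : ℝ) : criticalScale k ω A B = criticalScale k ω B A := by
  rw [criticalScale, criticalScale, add_comm]

theorem criticalScale_sq {A B : ℝ} (hk : 0 ≤ k) (hω : 0 ≤ ω) (hA : A ≠ 0) :
    criticalScale k ω A B ^ 2 = (k / ω * (A ^ 2 + B ^ 2)) ^ k / (A ^ 2 + B ^ 2) := by
  have hS : 0 < A ^ 2 + B ^ 2 := by positivity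
  rw [eq_div_iff hS.ne', criticalScale, mul_pow, ← rpow_mul_natCast (by positivity),
    ← rpow_mul_natCast hS.le, mul_rpow (by positivity) hS.le, mul_assoc,
    ← rpow_add_one hS.ne']
  norm_num

theorem potentialDerivFst_eq_zero {A B x y : ℝ} (hk : 0 < k) (hω : 0 < ω) (hA : A ≠ 0)
    (hx : x ^ 2 = A ^ 2 * criticalScale k ω A B ^ 2)
    (hy : y ^ 2 = B ^ 2 * criticalScale k ω A B ^ 2) :
    potentialDerivFst k ω (A ^ 4) (B ^ 4) x y = 0 := by
  have hρ : 0 < k / ω * (A ^ 2 + B ^ 2) := by positivity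
  have hc := criticalScale_sq (B := B) hk.le hω.le hA
  have hr : x ^ 2 + y ^ 2 = (k / ω * (A ^ 2 + B ^ 2)) ^ k := by
    rw [hx, hy, hc]
    field_simp
  have hpow (e : ℝ) :
      ((k / ω * (A ^ 2 + B ^ 2)) ^ k) ^ e = (k / ω * (A ^ 2 + B ^ 2)) ^ (k * e) :=
    (rpow_mul hρ.le k e).symm
  have e₁ : k * (1 / k - 1) = 1 - k := by field_simp
  have e₂ : k * ((k - 1) / k - 1) = -1 := by field_simp; ring
  have e₃ : k * ((k - 1) / k) = k - 1 := by field_simp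
  unfold potentialDerivFst
  rw [hr, hpow, hpow, hpow, e₁, e₂, e₃, rpow_sub hρ, rpow_sub_one hρ.ne', rpow_neg_one,
    rpow_one, hx, hy, hc, mul_eq_zero]
  right
  field_simp
  ring

theorem deriv_potential_fst_eq_zero {A B x y : ℝ} (hk : 0 < k) (hω : 0 < ω) (hA : A ≠ 0)
    (hx : x ^ 2 = A ^ 2 * criticalScale k ω A B ^ 2)
    (hy : y ^ 2 = B ^ 2 * criticalScale k ω A B ^ 2) :
    deriv (fun q => potential k ω (A ^ 4) (B ^ 4) q y) x = 0 := by
  have hx₀ : x ≠ 0 := by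
    have hx_sq : 0 < x ^ 2 := by rw [hx, criticalScale_sq hk.le hω.le hA]; positivity
    exact (pow_ne_zero_iff two_ne_zero).mp hx_sq.ne'
  exact (hasDerivAt_potential_fst y hx₀).deriv.trans
    (potentialDerivFst_eq_zero hk hω hA hx hy)

theorem deriv_potential_snd_eq_zero {A B x y : ℝ} (hk : 0 < k) (hω : 0 < ω) (hB : B ≠ 0)
    (hx : x ^ 2 = A ^ 2 * criticalScale k ω A B ^ 2)
    (hy : y ^ 2 = B ^ 2 * criticalScale k ω A B ^ 2) :
    deriv (fun q => potential k ω (A ^ 4) (B ^ 4) x q) y = 0 := by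
  rw [funext fun q => potential_comm x q]
  rw [criticalScale_comm] at hx hy
  exact deriv_potential_fst_eq_zero hk hω hB hy hx

end TTW

/-- The four points (±A(k/ω)^{k/2}(A²+B²)^{(k-1)/2}, ±B(k/ω)^{k/2}(A²+B²)^{(k-1)/2})
are critical points of the TTW effective potential. -/
theorem stmt_8 (k ω A B : ℝ) (hk : 0 < k) (hω : 0 < ω) (hA : 0 < A) (hB : 0 < B)
    (σ₁ σ₂ : ℝ) (hσ₁ : σ₁ = 1 ∨ σ₁ = -1) (hσ₂ : σ₂ = 1 ∨ σ₂ = -1) :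
    let V : ℝ → ℝ → ℝ := fun q₁ q₂ =>
      ω ^ 2 / 2 * (q₁ ^ 2 + q₂ ^ 2) ^ ((1 : ℝ) / k)
      + k ^ 2 / 2 * (q₁ ^ 2 + q₂ ^ 2) ^ ((k - 1) / k) * (A ^ 4 / q₁ ^ 2 + B ^ 4 / q₂ ^ 2)
    let c : ℝ := (k / ω) ^ (k / 2) * (A ^ 2 + B ^ 2) ^ ((k - 1) / 2)
    deriv (fun q₁ => V q₁ (σ₂ * B * c)) (σ₁ * A * c) = 0 ∧
    deriv (fun q₂ => V (σ₁ * A * c) q₂) (σ₂ * B * c) = 0 := by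
  intro V c
  have hsign {σ : ℝ} (hσ : σ = 1 ∨ σ = -1) (a : ℝ) : (σ * a * c) ^ 2 = a ^ 2 * c ^ 2 := by
    rcases hσ with rfl | rfl <;> ring
  exact ⟨TTW.deriv_potential_fst_eq_zero hk hω hA.ne' (hsign hσ₁ A) (hsign hσ₂ B),
    TTW.deriv_potential_snd_eq_zero hk hω hB.ne' (hsign hσ₁ A) (hsign hσ₂ B)⟩
end

section
/- At the critical point (q₁*, q₂*) = (η/(24c), -a/(6c)) of the Drach potential with c > 0 and η = sqrt(72bc - 6a²) > 0, the Hessian of V is diagonal with entries (128/3)(3/η)^{2/3} c^{5/3} and 24(3/η)^{2/3} c^{5/3}; in particular it is positive definite, and the ratio of the two frequencies sqrt(H₁₁/H₂₂) equals 4/3. -/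
/-!
Write `V(q₁, q₂) = (A(q₂) + 4c q₁²) q₁^{-2/3}` with `A(q₂) = a q₂ + b + 3c q₂²`. On `q₁ > 0` this
is `A q₁^{-2/3} + 4c q₁^{4/3}`, so the `q₁`-derivatives are those of two powers, while in `q₂` the
potential is a quadratic times the constant `q₁^{-2/3}`. The mixed derivative carries the factor
`A'(q₂) = a + 6c q₂`, which vanishes at `q₂* = -a/(6c)`; there `A = η²/(72c)`, and
`(q₁*)^{-2/3} = 4 (3/η)^{2/3} c^{2/3}` turns the remaining entries into the stated ones.
-/

open Filter Topology

section QuadraticMulRpow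

variable (A B p : ℝ) {x : ℝ}

theorem quadratic_mul_rpow_eq (hx : 0 < x) :
    (A + B * x ^ 2) * x ^ p = A * x ^ p + B * x ^ (p + 2) := by
  rw [Real.rpow_add hx, Real.rpow_two]
  ring

theorem hasDerivAt_quadratic_mul_rpow (hx : 0 < x) :
    HasDerivAt (fun y => (A + B * y ^ 2) * y ^ p)
      (A * p * x ^ (p - 1) + B * (p + 2) * x ^ (p + 1)) x := by
  have h := ((Real.hasDerivAt_rpow_const (p := p) (Or.inl hx.ne')).const_mul A).add
    ((Real.hasDerivAt_rpow_const (p := p + 2) (Or.inl hx.ne')).const_mul B)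
  refine (h.congr_deriv ?_).congr_of_eventuallyEq ?_
  · rw [show p + 2 - 1 = p + 1 by ring]
    ring
  · filter_upwards [eventually_gt_nhds hx] with y hy using quadratic_mul_rpow_eq A B p hy

theorem deriv_deriv_quadratic_mul_rpow (hx : 0 < x) :
    deriv (deriv fun y => (A + B * y ^ 2) * y ^ p) x =
      (A * p * (p - 1) / x ^ 2 + B * (p + 2) * (p + 1)) * x ^ p := by
  have hderiv : deriv (fun y => (A + B * y ^ 2) * y ^ p) =ᶠ[𝓝 x]
      fun y => A * p * y ^ (p - 1) + B * (p + 2) * y ^ (p + 1) := by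
    filter_upwards [eventually_gt_nhds hx] with y hy
    exact (hasDerivAt_quadratic_mul_rpow A B p hy).deriv
  have h : HasDerivAt (fun y => A * p * y ^ (p - 1) + B * (p + 2) * y ^ (p + 1))
      (A * p * ((p - 1) * x ^ (p - 1 - 1)) + B * (p + 2) * ((p + 1) * x ^ (p + 1 - 1))) x :=
    ((Real.hasDerivAt_rpow_const (Or.inl hx.ne')).const_mul (A * p)).add
      ((Real.hasDerivAt_rpow_const (Or.inl hx.ne')).const_mul (B * (p + 2)))
  rw [hderiv.deriv_eq, h.deriv, show p - 1 - 1 = p - 2 by ring, show p + 1 - 1 = p by ring,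
    Real.rpow_sub hx, Real.rpow_two]
  field_simp

end QuadraticMulRpow

noncomputable def drachPotential (a b c q₁ q₂ : ℝ) : ℝ :=
  (a * q₂ + b + c * (4 * q₁ ^ 2 + 3 * q₂ ^ 2)) * q₁ ^ (-(2 : ℝ) / 3)

section DrachPotential

variable (a b c : ℝ)

theorem drachPotential_eq (q₁ q₂ : ℝ) :
    drachPotential a b c q₁ q₂ =
      (a * q₂ + b + 3 * c * q₂ ^ 2 + 4 * c * q₁ ^ 2) * q₁ ^ (-(2 : ℝ) / 3) := by
  unfold drachPotential
  ring

theorem hasDerivAt_drachPotential_coeff (q₂ : ℝ) :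
    HasDerivAt (fun y => a * y + b + 3 * c * y ^ 2) (a + 6 * c * q₂) q₂ := by
  have h := (((hasDerivAt_id' q₂).const_mul a).add_const b).add
    ((hasDerivAt_pow 2 q₂).const_mul (3 * c))
  exact h.congr_deriv (by ring)

theorem deriv_deriv_drachPotential_fst {q₁ : ℝ} (q₂ : ℝ) (hq₁ : 0 < q₁) :
    deriv (deriv fun x => drachPotential a b c x q₂) q₁ =
      (10 / 9 * (a * q₂ + b + 3 * c * q₂ ^ 2) / q₁ ^ 2 + 16 / 9 * c) *
        q₁ ^ (-(2 : ℝ) / 3) := by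
  simp only [drachPotential_eq]
  rw [deriv_deriv_quadratic_mul_rpow _ _ _ hq₁]
  congr 1
  ring

theorem deriv_deriv_drachPotential_snd (q₁ q₂ : ℝ) :
    deriv (deriv fun y => drachPotential a b c q₁ y) q₂ = 6 * c * q₁ ^ (-(2 : ℝ) / 3) := by
  have hderiv : deriv (fun y => drachPotential a b c q₁ y) =
      fun y => (a + 6 * c * y) * q₁ ^ (-(2 : ℝ) / 3) := by
    funext y
    simp only [drachPotential_eq]
    exact (((hasDerivAt_drachPotential_coeff a b c y).add_const _).mul_const _).deriv
  have h := (((hasDerivAt_id' q₂).const_mul (6 * c)).const_add a).mul_const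
    (q₁ ^ (-(2 : ℝ) / 3))
  rw [hderiv, h.deriv, mul_one]

theorem deriv_deriv_drachPotential_fst_snd {q₁ : ℝ} (q₂ : ℝ) (hq₁ : 0 < q₁) :
    deriv (fun y => deriv (fun x => drachPotential a b c x y) q₁) q₂ =
      -(2 / 3) * (a + 6 * c * q₂) * q₁ ^ (-(5 : ℝ) / 3) := by
  have hderiv : (fun y => deriv (fun x => drachPotential a b c x y) q₁) = fun y =>
      (a * y + b + 3 * c * y ^ 2) * (-(2 : ℝ) / 3) * q₁ ^ (-(2 : ℝ) / 3 - 1)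
        + 4 * c * (-(2 : ℝ) / 3 + 2) * q₁ ^ (-(2 : ℝ) / 3 + 1) := by
    funext y
    simp only [drachPotential_eq]
    exact (hasDerivAt_quadratic_mul_rpow _ _ _ hq₁).deriv
  have h := ((((hasDerivAt_drachPotential_coeff a b c q₂).mul_const (-(2 : ℝ) / 3)).mul_const
    (q₁ ^ (-(2 : ℝ) / 3 - 1))).add_const
      (4 * c * (-(2 : ℝ) / 3 + 2) * q₁ ^ (-(2 : ℝ) / 3 + 1)))
  rw [hderiv, h.deriv, show -(2 : ℝ) / 3 - 1 = -(5 : ℝ) / 3 by norm_num]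
  ring

end DrachPotential

theorem div_rpow_neg_two_thirds {η c : ℝ} (hη : 0 < η) (hc : 0 < c) :
    (η / (24 * c)) ^ (-(2 : ℝ) / 3) = 4 * (3 / η) ^ ((2 : ℝ) / 3) * c ^ ((2 : ℝ) / 3) := by
  have h8 : (8 : ℝ) ^ ((2 : ℝ) / 3) = 4 := by
    rw [show (8 : ℝ) = 2 ^ (3 : ℝ) by norm_num, ← Real.rpow_mul (by norm_num)]
    norm_num
  rw [neg_div, Real.rpow_neg (by positivity), ← Real.inv_rpow (by positivity),
    show (η / (24 * c))⁻¹ = 8 * (3 / η * c) by field_simp; ring,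
    Real.mul_rpow (by norm_num) (by positivity), Real.mul_rpow (by positivity) hc.le, h8]
  ring

/-- At the critical point of the Drach potential the Hessian is diagonal with entries
(128/3)(3/η)^{2/3}c^{5/3} and 24(3/η)^{2/3}c^{5/3}; it is positive definite, and the
frequency ratio sqrt(H₁₁/H₂₂) equals 4/3. -/
theorem stmt_11 (a b c : ℝ) (hc : 0 < c) (hb : a ^ 2 / (12 * c) < b) :
    let η : ℝ := Real.sqrt (72 * b * c - 6 * a ^ 2)
    let V : ℝ → ℝ → ℝ := fun q₁ q₂ =>
      (a * q₂ + b + c * (4 * q₁ ^ 2 + 3 * q₂ ^ 2)) * q₁ ^ (-(2 : ℝ) / 3)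
    let q₁s : ℝ := η / (24 * c)
    let q₂s : ℝ := -a / (6 * c)
    let H₁₁ : ℝ := 128 / 3 * (3 / η) ^ ((2 : ℝ) / 3) * c ^ ((5 : ℝ) / 3)
    let H₂₂ : ℝ := 24 * (3 / η) ^ ((2 : ℝ) / 3) * c ^ ((5 : ℝ) / 3)
    deriv (deriv (fun q₁ => V q₁ q₂s)) q₁s = H₁₁ ∧
    deriv (deriv (fun q₂ => V q₁s q₂)) q₂s = H₂₂ ∧
    deriv (fun q₂ => deriv (fun q₁ => V q₁ q₂) q₁s) q₂s = 0 ∧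
    (Matrix.diagonal ![H₁₁, H₂₂]).PosDef ∧
    Real.sqrt (H₁₁ / H₂₂) = 4 / 3 := by
  intro η V q₁s q₂s H₁₁ H₂₂
  have hdisc : 0 < 72 * b * c - 6 * a ^ 2 := by
    rw [div_lt_iff₀ (by positivity)] at hb
    nlinarith
  have hη : 0 < η := Real.sqrt_pos.mpr hdisc
  have hη_sq : η ^ 2 = 72 * b * c - 6 * a ^ 2 := Real.sq_sqrt hdisc.le
  have hq₁s : 0 < q₁s := by positivity
  have hq₁s_rpow : q₁s ^ (-(2 : ℝ) / 3) = 4 * (3 / η) ^ ((2 : ℝ) / 3) * c ^ ((2 : ℝ) / 3) :=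
    div_rpow_neg_two_thirds hη hc
  have hc_rpow : c ^ ((5 : ℝ) / 3) = c * c ^ ((2 : ℝ) / 3) := by
    rw [show (5 : ℝ) / 3 = 1 + 2 / 3 by norm_num, Real.rpow_add hc, Real.rpow_one]
  have hcrit : a + 6 * c * q₂s = 0 := by
    simp only [q₂s]
    field_simp
    ring
  have hcoeff : a * q₂s + b + 3 * c * q₂s ^ 2 = η ^ 2 / (72 * c) := by
    simp only [q₂s]
    rw [hη_sq]
    field_simp
    ring
  have hH₂₂ : 0 < H₂₂ := by positivity
  have hratio : H₁₁ / H₂₂ = (4 / 3) ^ 2 := by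
    rw [div_eq_iff hH₂₂.ne']
    ring
  have hV : V = drachPotential a b c := rfl
  rw [hV]
  refine ⟨?_, ?_, ?_, ?_, ?_⟩
  · rw [deriv_deriv_drachPotential_fst _ _ _ _ hq₁s, hcoeff, hq₁s_rpow]
    simp only [H₁₁, q₁s, hc_rpow]
    field_simp
    ring
  · rw [deriv_deriv_drachPotential_snd, hq₁s_rpow]
    simp only [H₂₂, hc_rpow]
    ring
  · rw [deriv_deriv_drachPotential_fst_snd _ _ _ _ hq₁s, hcrit, mul_zero, zero_mul]
  · refine Matrix.PosDef.diagonal fun i => ?_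
    fin_cases i <;>
      simp only [Fin.zero_eta, Fin.mk_one, Matrix.cons_val_zero, Matrix.cons_val_one] <;>
      positivity
  · rw [hratio, Real.sqrt_sq (by norm_num)]
end
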